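/- Let Q be an acyclic conjunctive query with join tree J_Q and let (𝒜,V,α,ψ) be a cover description for Q such that 𝒜 is not connected in J_Q. If 𝓑 ⊆ 𝒜 is a maximal subset of 𝒜 that is connected in J_Q, then both (𝓑,V,α,ψ) and (𝒜∖𝓑,V,α,ψ) are cover descriptions for Q; in particular, bvars(𝓑) ⊆ bvars(𝒜). -/

import Mathlib

/-- A relational atom (or fact): a relation symbol with a list of arguments.
Arguments are natural numbers, serving both as variables and as data values. -/
structure Atom where
  rel : ℕ
  args : List ℕ
deriving DecidableEq

/-- Apply a substitution to an atom. -/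
def mapAtom (f : ℕ → ℕ) (A : Atom) : Atom := ⟨A.rel, A.args.map f⟩

/-- The variables of an atom. -/
def Atom.vars (A : Atom) : Finset ℕ := A.args.toFinset

/-- The variables of a finite set of atoms. -/
def varsOf (B : Finset Atom) : Finset ℕ := B.biUnion Atom.vars

/-- A conjunctive query: a head atom and a finite set of body atoms. -/
structure CQ where
  head : Atom
  body : Finset Atom
deriving DecidableEq

/-- All variables of a conjunctive query. -/
def CQ.vars (Q : CQ) : Finset ℕ := Q.head.vars ∪ varsOf Q.body

/-- A schema: a set of relation symbols together with an arity function. -/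
structure Schema where
  rels : Set ℕ
  ar : ℕ → ℕ

/-- An atom (or fact) over a schema. -/
def atomOver (σ : Schema) (A : Atom) : Prop :=
  A.rel ∈ σ.rels ∧ A.args.length = σ.ar A.rel

/-- `Q` is a (well-formed) conjunctive query over schema `σ`:
nonempty body of σ-atoms, head relation symbol not in σ, and safety. -/
def isCQ (σ : Schema) (Q : CQ) : Prop :=
  Q.body.Nonempty ∧ (∀ A ∈ Q.body, atomOver σ A) ∧
  Q.head.rel ∉ σ.rels ∧ Q.head.vars ⊆ varsOf Q.body

/-- A database is a set of facts (finiteness is imposed where needed). -/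
abbrev Database := Set Atom

/-- A database over a schema. -/
def isDBOver (σ : Schema) (D : Database) : Prop := ∀ F ∈ D, atomOver σ F

/-- The result of a conjunctive query on a database. -/
def evalCQ (Q : CQ) (D : Database) : Set Atom :=
  { F | ∃ ν : ℕ → ℕ, (∀ A ∈ Q.body, mapAtom ν A ∈ D) ∧ mapAtom ν Q.head = F }

/-- Containment of conjunctive queries. -/
def containedCQ (Q1 Q2 : CQ) : Prop :=
  ∀ D : Database, D.Finite → evalCQ Q1 D ⊆ evalCQ Q2 D

/-- Equivalence of conjunctive queries. -/
def equivCQ (Q1 Q2 : CQ) : Prop :=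
  ∀ D : Database, D.Finite → evalCQ Q1 D = evalCQ Q2 D

/-- A conjunctive query is minimal if no equivalent CQ has strictly fewer body atoms. -/
def isMinimal (Q : CQ) : Prop :=
  ∀ Q2 : CQ, equivCQ Q Q2 → Q.body.card ≤ Q2.body.card

/-- A homomorphism from `Q2` to `Q1`. -/
def isHom (h : ℕ → ℕ) (Q2 Q1 : CQ) : Prop :=
  (∀ A ∈ Q2.body, mapAtom h A ∈ Q1.body) ∧ mapAtom h Q2.head = Q1.head

/-- A body homomorphism from `Q2` to `Q1`. -/
def isBodyHom (h : ℕ → ℕ) (Q2 Q1 : CQ) : Prop :=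
  ∀ A ∈ Q2.body, mapAtom h A ∈ Q1.body

/-- A set of views over σ: each view is a CQ over σ and views have
pairwise distinct head relation symbols. -/
def isViewSet (σ : Schema) (𝒱 : Finset CQ) : Prop :=
  (∀ V ∈ 𝒱, isCQ σ V) ∧
  ∀ V ∈ 𝒱, ∀ W ∈ 𝒱, V ≠ W → V.head.rel ≠ W.head.rel

/-- The 𝒱-defined database 𝒱(D). -/
def viewDB (𝒱 : Finset CQ) (D : Database) : Database :=
  ⋃ V ∈ 𝒱, evalCQ V D

/-- `Q'` is a CQ over the schema σ_𝒱 of the head relations of the views 𝒱. -/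
def overViews (𝒱 : Finset CQ) (Q' : CQ) : Prop :=
  Q'.body.Nonempty ∧
  (∀ A ∈ Q'.body, ∃ V ∈ 𝒱, A.rel = V.head.rel ∧ A.args.length = V.head.args.length) ∧
  (∀ V ∈ 𝒱, Q'.head.rel ≠ V.head.rel) ∧
  Q'.head.vars ⊆ varsOf Q'.body

/-- `Q'` is a 𝒱-rewriting of `Q`: `Q'` is over σ_𝒱 and `Q'(𝒱(D)) = Q(D)`
for every (finite) database `D` over σ. -/
def isRewriting (σ : Schema) (𝒱 : Finset CQ) (Q Q' : CQ) : Prop :=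
  overViews 𝒱 Q' ∧
  ∀ D : Database, D.Finite → isDBOver σ D →
    evalCQ Q' (viewDB 𝒱 D) = evalCQ Q D

/-- `T` is a join tree for the atom set `B`. -/
def joinTreeProp (B : Finset Atom) (T : SimpleGraph {A : Atom // A ∈ B}) : Prop :=
  T.IsTree ∧
  ∀ (x : ℕ) (A A' : {A : Atom // A ∈ B}) (p : T.Walk A A'), p.IsPath →
    x ∈ A.1.vars → x ∈ A'.1.vars → ∀ C ∈ p.support, x ∈ C.1.vars

/-- The atom set `B` has a join tree. -/
def hasJoinTree (B : Finset Atom) : Prop :=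
  ∃ T : SimpleGraph {A : Atom // A ∈ B}, joinTreeProp B T

/-- A conjunctive query is acyclic if its body has a join tree. -/
def isAcyclicCQ (Q : CQ) : Prop := hasJoinTree Q.body

/-- A conjunctive query is free-connex acyclic. -/
def isFreeConnex (Q : CQ) : Prop :=
  isAcyclicCQ Q ∧ hasJoinTree (insert Q.head Q.body)

/-- The bridge variables of `𝒜 ⊆ body(Q)`. -/
def bvars (Q : CQ) (𝒜 : Finset Atom) : Finset ℕ :=
  varsOf 𝒜 ∩ (Q.head.vars ∪ varsOf (Q.body \ 𝒜))

/-- An application of a view `V`: a substitution that does not unify any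
quantified variable of `V` with another variable of `V`. -/
def isApplication (V : CQ) (α : ℕ → ℕ) : Prop :=
  ∀ x ∈ varsOf V.body, x ∉ V.head.vars →
    ∀ y ∈ CQ.vars V, y ≠ x → α x ≠ α y

/-- The query α(V). -/
def applyCQ (α : ℕ → ℕ) (V : CQ) : CQ :=
  ⟨mapAtom α V.head, V.body.image (mapAtom α)⟩

/-- `(𝒜, V, α, ψ)` is a cover description for `Q`. -/
def isCoverDesc (Q : CQ) (𝒜 : Finset Atom) (V : CQ) (α ψ : ℕ → ℕ) : Prop :=
  𝒜 ⊆ Q.body ∧ isApplication V α ∧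
  𝒜 ⊆ V.body.image (mapAtom α) ∧
  bvars Q 𝒜 ⊆ V.head.vars.image α ∧
  isBodyHom ψ (applyCQ α V) Q ∧
  ∀ x ∈ varsOf 𝒜, ψ x = x

/-- A cover partition for `Q` over `𝒱`: a collection of cover descriptions
whose atom sets partition `body(Q)`. -/
def isCoverPartition (Q : CQ) (𝒱 : Finset CQ) (m : ℕ)
    (𝒜 : Fin m → Finset Atom) (V : Fin m → CQ) (α ψ : Fin m → ℕ → ℕ) : Prop :=
  (∀ i, V i ∈ 𝒱 ∧ isCoverDesc Q (𝒜 i) (V i) (α i) (ψ i)) ∧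
  ∀ A ∈ Q.body, ∃! i, A ∈ 𝒜 i

/-- Consistency of a cover partition: a variable of any `α_j(V_j)` lies in the
range of another `α_i` only if it also lies in `bvars(𝒜_j)`. -/
def isConsistent (Q : CQ) (m : ℕ) (𝒜 : Fin m → Finset Atom) (V : Fin m → CQ)
    (α : Fin m → ℕ → ℕ) : Prop :=
  ∀ i j : Fin m, i ≠ j → ∀ z ∈ CQ.vars (applyCQ (α j) (V j)),
    (∃ x ∈ CQ.vars (V i), α i x = z) → z ∈ bvars Q (𝒜 j)

/-- The query `Q_𝒞` induced by a (consistent) cover partition. -/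
def inducedCQ (Q : CQ) (m : ℕ) (V : Fin m → CQ) (α : Fin m → ℕ → ℕ) : CQ :=
  ⟨Q.head, Finset.image (fun i => mapAtom (α i) (V i).head) Finset.univ⟩

/-- Quantified variable disjointness for a family of view applications. -/
def QVD (m : ℕ) (V : Fin m → CQ) (α : Fin m → ℕ → ℕ) : Prop :=
  ∀ i j : Fin m, i ≠ j → ∀ x ∈ varsOf (V i).body, x ∉ (V i).head.vars →
    ∀ y ∈ CQ.vars (V j), α i x ≠ α j y

/-- `QE` is an expansion of `Q'` with respect to the views `𝒱`. -/
def isExpansion (𝒱 : Finset CQ) (Q' QE : CQ) : Prop :=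
  ∃ (m : ℕ) (A' : Fin m → Atom) (V : Fin m → CQ) (α : Fin m → ℕ → ℕ),
    (∀ i, V i ∈ 𝒱 ∧ isApplication (V i) (α i) ∧ A' i = mapAtom (α i) (V i).head) ∧
    Q'.body = Finset.image A' Finset.univ ∧
    QVD m V α ∧
    QE.head = Q'.head ∧
    QE.body = Finset.biUnion Finset.univ (fun i => (V i).body.image (mapAtom (α i)))

/-- `atoms(x)`: the body atoms of `Q` containing the variable `x`. -/
def atomsWith (Q : CQ) (x : ℕ) : Finset Atom :=
  Q.body.filter (fun A => x ∈ A.vars)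

/-- Hierarchical conjunctive queries. -/
def isHierarchical (Q : CQ) : Prop :=
  ∀ x y : ℕ, atomsWith Q x ⊆ atomsWith Q y ∨ atomsWith Q y ⊆ atomsWith Q x ∨
    atomsWith Q x ∩ atomsWith Q y = ∅

/-- q-hierarchical conjunctive queries. -/
def isQHierarchical (Q : CQ) : Prop :=
  isHierarchical Q ∧ ∀ x y : ℕ, atomsWith Q x ⊂ atomsWith Q y →
    x ∈ Q.head.vars → y ∈ Q.head.vars

/-- `P` is a partition of `body(Q)` witnessing weak head arity at most `k`. -/
def witnessesWHA (Q : CQ) (k n : ℕ) (P : Fin n → Finset Atom) : Prop :=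
  (∀ i, (P i).Nonempty) ∧ (∀ i, P i ⊆ Q.body) ∧ (∀ A ∈ Q.body, ∃! i, A ∈ P i) ∧
  (∀ i, (varsOf (P i) ∩ Q.head.vars).card ≤ k) ∧
  (∀ i j, i ≠ j → ∀ x ∈ varsOf (P i), x ∈ varsOf (P j) → x ∈ Q.head.vars)

/-- `Q` has weak head arity at most `k`. -/
def hasWHAle (Q : CQ) (k : ℕ) : Prop := ∃ n P, witnessesWHA Q k n P

/-- The weak head arity of `Q`. -/
noncomputable def weakHeadArity (Q : CQ) : ℕ := sInf {k | hasWHAle Q k}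

/-- The cover graph of `Q`: vertices are the body atoms, with an edge between
two atoms iff they share a variable not occurring in the head. -/
def coverGraph (Q : CQ) : SimpleGraph {A : Atom // A ∈ Q.body} :=
  SimpleGraph.fromRel (fun A B => ∃ x, x ∈ A.1.vars ∧ x ∈ B.1.vars ∧ x ∉ Q.head.vars)

/-- A subset `s` of the atom set `B` is connected in the (join) tree `T`. -/
def connectedIn (B : Finset Atom) (T : SimpleGraph {A : Atom // A ∈ B}) (s : Finset Atom) : Prop :=
  (T.induce {A : {A : Atom // A ∈ B} | A.1 ∈ s}).Connected


private lemma key7 (Q : CQ) (T : SimpleGraph {A : Atom // A ∈ Q.body}) (hT : joinTreeProp Q.body T)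
    (𝒜 : Finset Atom) (h𝒜 : 𝒜 ⊆ Q.body)
    (𝓑 : Finset Atom) (hsub : 𝓑 ⊆ 𝒜) (hconn : connectedIn Q.body T 𝓑)
    (hmax : ∀ 𝓑' : Finset Atom, 𝓑 ⊆ 𝓑' → 𝓑' ⊆ 𝒜 → connectedIn Q.body T 𝓑' → 𝓑' = 𝓑)
    (x : ℕ) (A A' : Atom) (hA : A ∈ 𝓑) (hA' : A' ∈ 𝒜 \ 𝓑)
    (hx : x ∈ A.vars) (hx' : x ∈ A'.vars) : x ∈ varsOf (Q.body \ 𝒜) := by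
  classical
  simp only [Finset.mem_sdiff] at hA'
  obtain ⟨hA'1, hA'2⟩ := hA'
  have hAb : A ∈ Q.body := h𝒜 (hsub hA)
  have hA'b : A' ∈ Q.body := h𝒜 hA'1
  obtain ⟨p, hp, -⟩ := hT.1.existsUnique_path ⟨A, hAb⟩ ⟨A', hA'b⟩
  by_cases hcase : ∀ C ∈ p.support, C.1 ∈ 𝒜
  · exfalso
    set 𝓑' : Finset Atom := 𝓑 ∪ (p.support.toFinset.image (·.1)) with h𝓑'
    have hsub' : 𝓑 ⊆ 𝓑' := Finset.subset_union_left
    have h𝓑'𝒜 : 𝓑' ⊆ 𝒜 := by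
      intro B hB
      rcases Finset.mem_union.mp hB with h | h
      · exact hsub h
      · obtain ⟨C, hC, rfl⟩ := Finset.mem_image.mp h
        exact hcase C (List.mem_toFinset.mp hC)
    have hsetL : {B : {A : Atom // A ∈ Q.body} | B.1 ∈ 𝓑'}
        = {B : {A : Atom // A ∈ Q.body} | B.1 ∈ 𝓑} ∪ {B | B ∈ p.support} := by
      ext B
      simp only [Set.mem_setOf_eq, Set.mem_union, h𝓑', Finset.mem_union, Finset.mem_image,
        List.mem_toFinset]
      constructor
      · rintro (h | ⟨C, hC, hCB⟩)
        · exact Or.inl h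
        · exact Or.inr (by rwa [show C = B from Subtype.ext hCB] at hC)
      · rintro (h | h)
        · exact Or.inl h
        · exact Or.inr ⟨B, h, rfl⟩
    have hconn' : connectedIn Q.body T 𝓑' := by
      unfold connectedIn
      rw [hsetL]
      refine SimpleGraph.induce_union_connected hconn.preconnected p.connected_induce_support.preconnected ?_
      exact ⟨⟨A, hAb⟩, hA, p.start_mem_support⟩
    have := hmax 𝓑' hsub' h𝓑'𝒜 hconn'
    apply hA'2
    rw [← this]
    exact Finset.mem_union_right _ (Finset.mem_image.mpr
      ⟨⟨A', hA'b⟩, List.mem_toFinset.mpr p.end_mem_support, rfl⟩)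
  · push_neg at hcase
    obtain ⟨C, hCp, hC𝒜⟩ := hcase
    have hxC : x ∈ C.1.vars := hT.2 x _ _ p hp hx hx' C hCp
    exact Finset.mem_biUnion.mpr ⟨C.1, Finset.mem_sdiff.mpr ⟨C.2, hC𝒜⟩, hxC⟩

/-- Let `Q` be acyclic with join tree `T` and `(𝒜,V,α,ψ)` a cover
description for `Q` with `𝒜` not connected in `T`. If `𝓑 ⊆ 𝒜` is a maximal subset
of `𝒜` connected in `T`, then `(𝓑,V,α,ψ)` and `(𝒜∖𝓑,V,α,ψ)` are cover descriptions
for `Q`; in particular `bvars(𝓑) ⊆ bvars(𝒜)`. -/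
theorem statement7 (σ : Schema) (Q : CQ) (hQ : isCQ σ Q)
    (T : SimpleGraph {A : Atom // A ∈ Q.body}) (hT : joinTreeProp Q.body T)
    (𝒜 : Finset Atom) (V : CQ) (α ψ : ℕ → ℕ)
    (hcd : isCoverDesc Q 𝒜 V α ψ)
    (hnc : ¬ connectedIn Q.body T 𝒜)
    (𝓑 : Finset Atom) (hsub : 𝓑 ⊆ 𝒜) (hconn : connectedIn Q.body T 𝓑)
    (hmax : ∀ 𝓑' : Finset Atom, 𝓑 ⊆ 𝓑' → 𝓑' ⊆ 𝒜 → connectedIn Q.body T 𝓑' → 𝓑' = 𝓑) :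
    isCoverDesc Q 𝓑 V α ψ ∧ isCoverDesc Q (𝒜 \ 𝓑) V α ψ ∧ bvars Q 𝓑 ⊆ bvars Q 𝒜 := by
  classical
  obtain ⟨h1, h2, h3, h4, h5, h6⟩ := hcd
  have hvmonoB : varsOf 𝓑 ⊆ varsOf 𝒜 := Finset.biUnion_subset_biUnion_of_subset_left _ hsub
  have hvmonoD : varsOf (𝒜 \ 𝓑) ⊆ varsOf 𝒜 :=
    Finset.biUnion_subset_biUnion_of_subset_left _ Finset.sdiff_subset
  have hbB : bvars Q 𝓑 ⊆ bvars Q 𝒜 := by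
    intro x hx
    obtain ⟨hx1, hx2⟩ := Finset.mem_inter.mp hx
    refine Finset.mem_inter.mpr ⟨hvmonoB hx1, ?_⟩
    rcases Finset.mem_union.mp hx2 with h | h
    · exact Finset.mem_union_left _ h
    · obtain ⟨A', hA', hxA'⟩ := Finset.mem_biUnion.mp h
      obtain ⟨hA'b, hA'B⟩ := Finset.mem_sdiff.mp hA'
      by_cases hc : A' ∈ 𝒜
      · obtain ⟨A, hA, hxA⟩ := Finset.mem_biUnion.mp hx1
        exact Finset.mem_union_right _
          (key7 Q T hT 𝒜 h1 𝓑 hsub hconn hmax x A A' hA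
            (Finset.mem_sdiff.mpr ⟨hc, hA'B⟩) hxA hxA')
      · exact Finset.mem_union_right _
          (Finset.mem_biUnion.mpr ⟨A', Finset.mem_sdiff.mpr ⟨hA'b, hc⟩, hxA'⟩)
  have hbD : bvars Q (𝒜 \ 𝓑) ⊆ bvars Q 𝒜 := by
    intro x hx
    obtain ⟨hx1, hx2⟩ := Finset.mem_inter.mp hx
    refine Finset.mem_inter.mpr ⟨hvmonoD hx1, ?_⟩
    rcases Finset.mem_union.mp hx2 with h | h
    · exact Finset.mem_union_left _ h
    · obtain ⟨A', hA', hxA'⟩ := Finset.mem_biUnion.mp h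
      obtain ⟨hA'b, hA'D⟩ := Finset.mem_sdiff.mp hA'
      by_cases hc : A' ∈ 𝓑
      · obtain ⟨A, hA, hxA⟩ := Finset.mem_biUnion.mp hx1
        exact Finset.mem_union_right _
          (key7 Q T hT 𝒜 h1 𝓑 hsub hconn hmax x A' A hc hA hxA' hxA)
      · by_cases hc2 : A' ∈ 𝒜
        · exact absurd (Finset.mem_sdiff.mpr ⟨hc2, hc⟩) hA'D
        · exact Finset.mem_union_right _
            (Finset.mem_biUnion.mpr ⟨A', Finset.mem_sdiff.mpr ⟨hA'b, hc2⟩, hxA'⟩)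
  refine ⟨⟨hsub.trans h1, h2, hsub.trans h3, hbB.trans h4, h5,
      fun x hx => h6 x (hvmonoB hx)⟩,
    ⟨Finset.sdiff_subset.trans h1, h2, Finset.sdiff_subset.trans h3, hbD.trans h4, h5,
      fun x hx => h6 x (hvmonoD hx)⟩, hbB⟩
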